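/- arXiv:2312.15725 — 2 statements merged into one kernel-verified Lean document; each statement's English description precedes it below -/
import Mathlib

section
/- Let Σ be a symmetric positive definite real (n₁+n₂)×(n₁+n₂) matrix with blocks Σ_v (n₁×n₁), Σ_u (n₂×n₂), Σ_vu (n₁×n₂) and Σ_uv = Σ_vuᵀ, and let A ∈ ℝ^{n₁×m}, B ∈ ℝ^{n₂×m}. Let C be the stacked matrix [A; B] and G = (Σ_v − Σ_vu Σ_u⁻¹ Σ_uv)⁻¹ the inverse Schur complement of Σ_u in Σ. Then Cᵀ Σ⁻¹ C = Bᵀ Σ_u⁻¹ B + (Bᵀ Σ_u⁻¹ Σ_uv − Aᵀ) G (Bᵀ Σ_u⁻¹ Σ_uv − Aᵀ)ᵀ. -/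
/-!
Invert `Σ` blockwise around `Σ_u`: with `G` the inverse Schur complement,
`Σ⁻¹ = [[G, -G Σ_vu Σ_u⁻¹], [-Σ_u⁻¹ Σ_uv G, Σ_u⁻¹ + Σ_u⁻¹ Σ_uv G Σ_vu Σ_u⁻¹]]`.
Expanding `Cᵀ Σ⁻¹ C`, the four terms containing `G` combine into a single quadratic form in
`Σ_vu Σ_u⁻¹ B - A`. Positive definiteness of `Σ` makes its principal block `Σ_u` positive definite,
and `det Σ = det Σ_u * det (Σ_v - Σ_vu Σ_u⁻¹ Σ_uv)` then makes the Schur complement invertible.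
-/

open Matrix

namespace Matrix

variable {l m n o α : Type*} [Fintype m] [Fintype n] [DecidableEq m] [DecidableEq n] [CommRing α]
  {A : Matrix m m α} {B : Matrix m n α} {C : Matrix n m α} {D : Matrix n n α}

theorem isUnit_det_sub_mul_inv_mul_of_isUnit_det_fromBlocks
    (hM : IsUnit (fromBlocks A B C D).det) (hD : IsUnit D.det) :
    IsUnit (A - B * D⁻¹ * C).det := by
  let := D.invertibleOfIsUnitDet hD
  rw [det_fromBlocks₂₂, invOf_eq_nonsing_inv] at hM
  exact isUnit_of_mul_isUnit_right hM

theorem inv_fromBlocks_of_isUnit_det₂₂ (hD : IsUnit D.det)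
    (hS : IsUnit (A - B * D⁻¹ * C).det) :
    (fromBlocks A B C D)⁻¹ =
      fromBlocks (A - B * D⁻¹ * C)⁻¹ (-((A - B * D⁻¹ * C)⁻¹ * B * D⁻¹))
        (-(D⁻¹ * C * (A - B * D⁻¹ * C)⁻¹))
        (D⁻¹ + D⁻¹ * C * (A - B * D⁻¹ * C)⁻¹ * B * D⁻¹) := by
  let := D.invertibleOfIsUnitDet hD
  let : Invertible (A - B * ⅟D * C) := by
    rw [invOf_eq_nonsing_inv]
    exact invertibleOfIsUnitDet _ hS
  let := fromBlocks₂₂Invertible A B C D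
  simp only [← invOf_eq_nonsing_inv, invOf_fromBlocks₂₂_eq]

theorem fromCols_mul_inv_fromBlocks_mul_fromRows (hD : IsUnit D.det)
    (hS : IsUnit (A - B * D⁻¹ * C).det) (X : Matrix l m α) (Y : Matrix l n α)
    (U : Matrix m o α) (V : Matrix n o α) :
    fromCols X Y * (fromBlocks A B C D)⁻¹ * fromRows U V =
      Y * D⁻¹ * V + (Y * D⁻¹ * C - X) * (A - B * D⁻¹ * C)⁻¹ * (B * D⁻¹ * V - U) := by
  rw [inv_fromBlocks_of_isUnit_det₂₂ hD hS, fromCols_mul_fromBlocks, fromCols_mul_fromRows]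
  simp only [Matrix.mul_sub, Matrix.sub_mul, Matrix.mul_add, Matrix.add_mul,
    Matrix.mul_neg, Matrix.neg_mul, Matrix.mul_assoc]
  abel

end Matrix

/-- Joint SNR matrix with correlated noises, second form: with `C = [A; B]`,
`Σ = [[Σ_v, Σ_vu],[Σ_vuᵀ, Σ_u]]` positive definite, and
`G = (Σ_v − Σ_vu Σ_u⁻¹ Σ_uv)⁻¹` the inverse Schur complement of `Σ_u`,
`CᵀΣ⁻¹C = BᵀΣ_u⁻¹B + (BᵀΣ_u⁻¹Σ_uv − Aᵀ) G (BᵀΣ_u⁻¹Σ_uv − Aᵀ)ᵀ`. -/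
theorem joint_snr_schur_form_y {n₁ n₂ m : ℕ}
    (Sv : Matrix (Fin n₁) (Fin n₁) ℝ) (Su : Matrix (Fin n₂) (Fin n₂) ℝ)
    (Svu : Matrix (Fin n₁) (Fin n₂) ℝ)
    (hS : (Matrix.fromBlocks Sv Svu Svuᵀ Su).PosDef)
    (A : Matrix (Fin n₁) (Fin m) ℝ) (B : Matrix (Fin n₂) (Fin m) ℝ) :
    (Matrix.fromRows A B)ᵀ * (Matrix.fromBlocks Sv Svu Svuᵀ Su)⁻¹ * Matrix.fromRows A B
      = Bᵀ * Su⁻¹ * B +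
        (Bᵀ * Su⁻¹ * Svuᵀ - Aᵀ) * (Sv - Svu * Su⁻¹ * Svuᵀ)⁻¹ * (Bᵀ * Su⁻¹ * Svuᵀ - Aᵀ)ᵀ := by
  have hSu : Su.PosDef := hS.submatrix Sum.inr_injective
  have hSu_det : IsUnit Su.det := (isUnit_iff_isUnit_det Su).mp hSu.isUnit
  have hSchur_det : IsUnit (Sv - Svu * Su⁻¹ * Svuᵀ).det :=
    isUnit_det_sub_mul_inv_mul_of_isUnit_det_fromBlocks
      ((isUnit_iff_isUnit_det _).mp hS.isUnit) hSu_det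
  have hSu_symm : Suᵀ = Su := hSu.isHermitian
  have hCross : (Bᵀ * Su⁻¹ * Svuᵀ - Aᵀ)ᵀ = Svu * Su⁻¹ * B - A := by
    simp only [transpose_sub, transpose_mul, transpose_transpose, transpose_nonsing_inv, hSu_symm,
      Matrix.mul_assoc]
  rw [hCross, transpose_fromRows,
    fromCols_mul_inv_fromBlocks_mul_fromRows hSu_det hSchur_det]
end

section
/- Let B̃ ∈ ℝ^{n₂×m} and ρ ∈ ℝ^{n₁×n₂} with I − ρρᵀ positive definite, let Ã = ρB̃, and let Σ = [[I, ρ],[ρᵀ, I]] be the joint noise covariance (assumed positive definite). Then the joint SNR matrix of the stacked model C = [Ã; B̃] satisfies CᵀΣ⁻¹C = B̃ᵀB̃; that is, the first modality is redundant: adding x̃ to ỹ yields exactly the same Fisher information as ỹ alone. -/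
/-!
Whitening argument: `Σ` maps the stacked matrix `[0; B̃]` to `C = [ρB̃; B̃]`,
so `Σ⁻¹C = [0; B̃]` and `CᵀΣ⁻¹C = Cᵀ[0; B̃] = B̃ᵀB̃`.
-/

open Matrix

namespace Matrix

variable {R : Type*} {l m n₁ n₂ : Type*} [Fintype n₁] [Fintype n₂]

lemma fromBlocks_one_mul_fromRows_zero [Semiring R] [DecidableEq n₂]
    (P : Matrix n₁ n₁ R) (Q : Matrix n₁ n₂ R) (S : Matrix n₂ n₁ R) (B : Matrix n₂ m R) :
    fromBlocks P Q S 1 * fromRows (0 : Matrix n₁ m R) B = fromRows (Q * B) B := by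
  simp only [fromBlocks_mul_fromRows, Matrix.mul_zero, zero_add, Matrix.one_mul]

lemma transpose_fromRows_mul_fromRows_zero [Semiring R]
    (A : Matrix n₁ l R) (B : Matrix n₂ l R) (B' : Matrix n₂ m R) :
    (fromRows A B)ᵀ * fromRows (0 : Matrix n₁ m R) B' = Bᵀ * B' := by
  rw [transpose_fromRows, fromCols_mul_fromRows, Matrix.mul_zero, zero_add]

end Matrix

theorem first_modality_redundant_general {n₁ n₂ m : ℕ}
    (B : Matrix (Fin n₂) (Fin m) ℝ) (ρ : Matrix (Fin n₁) (Fin n₂) ℝ)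
    (hS : (Matrix.fromBlocks (1 : Matrix (Fin n₁) (Fin n₁) ℝ) ρ ρᵀ
      (1 : Matrix (Fin n₂) (Fin n₂) ℝ)).PosDef)
    (A : Matrix (Fin n₁) (Fin m) ℝ) (hA : A = ρ * B) :
    (Matrix.fromRows A B)ᵀ *
        (Matrix.fromBlocks (1 : Matrix (Fin n₁) (Fin n₁) ℝ) ρ ρᵀ
          (1 : Matrix (Fin n₂) (Fin n₂) ℝ))⁻¹ * Matrix.fromRows A B
      = Bᵀ * B := by
  have hdet := (isUnit_iff_isUnit_det _).mp hS.isUnit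
  have hwhitened : (fromBlocks 1 ρ ρᵀ 1)⁻¹ * fromRows (ρ * B) B = fromRows 0 B := by
    rw [← fromBlocks_one_mul_fromRows_zero, nonsing_inv_mul_cancel_left _ _ hdet]
  rw [hA, Matrix.mul_assoc, hwhitened, transpose_fromRows_mul_fromRows_zero]

/-- Modality redundancy: if `Ã = ρB̃`, then the joint SNR matrix of the stacked model
`C = [Ã; B̃]` with noise covariance `Σ = [[I, ρ],[ρᵀ, I]]` equals `B̃ᵀB̃`: the first
modality adds no Fisher information. -/
theorem first_modality_redundant {n₁ n₂ m : ℕ}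
    (B : Matrix (Fin n₂) (Fin m) ℝ) (ρ : Matrix (Fin n₁) (Fin n₂) ℝ)
    (hρ : ((1 : Matrix (Fin n₁) (Fin n₁) ℝ) - ρ * ρᵀ).PosDef)
    (hS : (Matrix.fromBlocks (1 : Matrix (Fin n₁) (Fin n₁) ℝ) ρ ρᵀ
      (1 : Matrix (Fin n₂) (Fin n₂) ℝ)).PosDef)
    (A : Matrix (Fin n₁) (Fin m) ℝ) (hA : A = ρ * B) :
    (Matrix.fromRows A B)ᵀ *
        (Matrix.fromBlocks (1 : Matrix (Fin n₁) (Fin n₁) ℝ) ρ ρᵀ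
          (1 : Matrix (Fin n₂) (Fin n₂) ℝ))⁻¹ * Matrix.fromRows A B
      = Bᵀ * B :=
  first_modality_redundant_general B ρ hS A hA
end
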